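/- arXiv:1803.08114 — 2 statements merged into one kernel-verified Lean document; each statement's English description precedes it below -/
import Mathlib

section
/- (Kaczmarz expected contraction, one step) Let A ∈ ℝ^{m×n} have unit-norm rows and let x* satisfy Ax* = b. If a row index i is chosen uniformly at random from [m] and x' = x + (bᵢ − aᵢᵀx)·aᵢ, then 𝔼‖x' − x*‖² ≤ (1 − σ_min²(A)/m)·‖x − x*‖². -/
open Matrix

/-- The Rayleigh lower bound: for a real symmetric matrix `B`, the quadratic form is
bounded below by the smallest eigenvalue times the squared norm. -/
lemma rayleigh_lower_bound {n : ℕ} (B : Matrix (Fin n) (Fin n) ℝ)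
    (hB : B.IsHermitian) (e : Fin n → ℝ) :
    (⨅ j, hB.eigenvalues j) * (e ⬝ᵥ e) ≤ e ⬝ᵥ (B *ᵥ e) := by
  set c : ℝ := ⨅ j, hB.eigenvalues j with hc
  have hpsd : (B - c • 1).PosSemidef := by
    have hspec := hB.spectral_theorem
    set U : Matrix (Fin n) (Fin n) ℝ := (hB.eigenvectorUnitary : Matrix (Fin n) (Fin n) ℝ)
    have hU : U * star U = 1 := (Matrix.mem_unitaryGroup_iff).mp hB.eigenvectorUnitary.2
    have key : B - c • 1 = U * (diagonal (fun j => hB.eigenvalues j - c)) * star U := by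
      have h1 : (c • (1 : Matrix (Fin n) (Fin n) ℝ)) = U * (c • 1) * star U := by
        rw [Matrix.mul_smul, Matrix.smul_mul, mul_one, hU]
      calc B - c • 1
          = U * diagonal (RCLike.ofReal ∘ hB.eigenvalues) * star U - U * (c • 1) * star U := by
            rw [← h1]; exact congrArg (· - c • 1) hspec
        _ = U * (diagonal (RCLike.ofReal ∘ hB.eigenvalues) - c • 1) * star U := by
            rw [Matrix.mul_sub, Matrix.sub_mul]
        _ = U * (diagonal (fun j => hB.eigenvalues j - c)) * star U := by
            congr 2
            ext j k
            by_cases h : j = k <;>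
              simp [Matrix.diagonal_apply, Matrix.one_apply, h, Matrix.sub_apply,
                Matrix.smul_apply]
    rw [key]
    apply Matrix.PosSemidef.mul_mul_conjTranspose_same
    refine Matrix.posSemidef_diagonal_iff.mpr fun j => ?_
    have : c ≤ hB.eigenvalues j := ciInf_le (Finite.bddBelow_range _) j
    linarith
  have := hpsd.dotProduct_mulVec_nonneg e
  simp only [RCLike.re_to_real, star_trivial] at this
  have hexp : e ⬝ᵥ ((B - c • 1) *ᵥ e) = e ⬝ᵥ (B *ᵥ e) - c * (e ⬝ᵥ e) := by
    rw [Matrix.sub_mulVec, dotProduct_sub, Matrix.smul_mulVec, dotProduct_smul,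
      Matrix.one_mulVec]
    ring_nf
  rw [hexp] at this
  linarith

/-- Kaczmarz expected one-step contraction: for a consistent system with unit-norm rows and
a uniformly chosen row, 𝔼‖x' − x*‖² ≤ (1 − σ_min²(A)/m)·‖x − x*‖², where σ_min²(A) is the
smallest eigenvalue of AᵀA. -/
theorem kaczmarz_expected_contraction (m n : ℕ) [NeZero m]
    (A : Matrix (Fin m) (Fin n) ℝ) (b : Fin m → ℝ) (x xstar : Fin n → ℝ)
    (hrows : ∀ i, ∑ j, (A i j) ^ 2 = 1)
    (hsol : A.mulVec xstar = b) :
    ∑ i : Fin m, (1 / m : ℝ) *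
        ∑ j, ((x j + (b i - A i ⬝ᵥ x) * A i j) - xstar j) ^ 2 ≤
      (1 - (⨅ j, (Matrix.isHermitian_conjTranspose_mul_self A).eigenvalues j) / m) *
        ∑ j, (x j - xstar j) ^ 2 := by
  set e : Fin n → ℝ := fun j => x j - xstar j with he
  have hm : (0 : ℝ) < m := by
    have := Nat.pos_of_ne_zero (NeZero.ne m)
    exact_mod_cast this
  set c : ℝ := ⨅ j, (Matrix.isHermitian_conjTranspose_mul_self A).eigenvalues j with hc
  -- rewrite b i using the solution
  have hb : ∀ i, b i = A i ⬝ᵥ xstar := fun i => by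
    rw [← hsol]; rfl
  -- inner sum simplification
  have hinner : ∀ i, ∑ j, ((x j + (b i - A i ⬝ᵥ x) * A i j) - xstar j) ^ 2
      = (∑ j, e j ^ 2) - (A i ⬝ᵥ e) ^ 2 := by
    intro i
    have hAe : A i ⬝ᵥ e = ∑ j, A i j * e j := rfl
    have hbi : b i - A i ⬝ᵥ x = -(A i ⬝ᵥ e) := by
      rw [hb i]
      simp only [dotProduct, he]
      rw [← Finset.sum_sub_distrib]
      rw [← Finset.sum_neg_distrib]
      congr 1; ext j; ring
    rw [hbi]
    have : ∀ j, ((x j + (-(A i ⬝ᵥ e)) * A i j) - xstar j) ^ 2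
        = e j ^ 2 - 2 * (A i ⬝ᵥ e) * (A i j * e j) + (A i ⬝ᵥ e) ^ 2 * A i j ^ 2 := by
      intro j; simp only [he]; ring
    simp only [this]
    rw [Finset.sum_add_distrib, Finset.sum_sub_distrib, ← Finset.mul_sum, ← Finset.mul_sum,
      ← hAe, hrows i]
    ring
  simp only [hinner]
  -- LHS = ‖e‖² − (1/m) ∑ i (A i ⬝ᵥ e)²
  have hLHS : ∑ i : Fin m, (1 / m : ℝ) * ((∑ j, e j ^ 2) - (A i ⬝ᵥ e) ^ 2)
      = (∑ j, e j ^ 2) - (1 / m) * ∑ i, (A i ⬝ᵥ e) ^ 2 := by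
    rw [← Finset.mul_sum, Finset.sum_sub_distrib, Finset.sum_const, Finset.card_univ,
      Fintype.card_fin, nsmul_eq_mul, mul_sub, ← mul_assoc]
    field_simp
  rw [hLHS]
  -- key spectral bound
  have hkey : c * ∑ j, e j ^ 2 ≤ ∑ i, (A i ⬝ᵥ e) ^ 2 := by
    have h1 : ∑ i, (A i ⬝ᵥ e) ^ 2 = e ⬝ᵥ ((Aᵀ * A) *ᵥ e) := by
      rw [← Matrix.mulVec_mulVec, Matrix.dotProduct_mulVec, Matrix.vecMul_transpose]
      simp only [dotProduct]
      refine Finset.sum_congr rfl fun i _ => ?_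
      simp only [Matrix.mulVec, dotProduct, he, mul_sub]
      ring
    have h2 : (e ⬝ᵥ e) = ∑ j, e j ^ 2 := by
      simp only [dotProduct]; congr 1; ext j; ring
    rw [h1, ← h2]
    exact rayleigh_lower_bound (Aᵀ * A) (Matrix.isHermitian_conjTranspose_mul_self A) e
  -- conclude
  have hdiv : c / m * ∑ j, e j ^ 2 ≤ (1 / m) * ∑ i, (A i ⬝ᵥ e) ^ 2 := by
    rw [div_eq_mul_one_div, mul_comm c (1/m), mul_assoc]
    apply mul_le_mul_of_nonneg_left hkey
    positivity
  have hrhs : (1 - c / m) * ∑ j, e j ^ 2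
      = (∑ j, e j ^ 2) - c / m * ∑ j, e j ^ 2 := by ring
  rw [hrhs]
  linarith
end

section
/- (Randomized Kaczmarz convergence) Let A ∈ ℝ^{m×n} have unit-norm rows, let x* satisfy Ax* = b, and let (x_k) be the randomized Kaczmarz iterates with rows chosen independently and uniformly from [m], starting from x₀. Then 𝔼‖x_k − x*‖² ≤ (1 − σ_min²(A)/m)^k · ‖x₀ − x*‖². -/
open Matrix

lemma quad_eq {n : ℕ} (M : Matrix (Fin n) (Fin n) ℝ) (hM : M.IsHermitian) (x : Fin n → ℝ) :
    x ⬝ᵥ M.mulVec x = ∑ j, hM.eigenvalues j *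
      (hM.eigenvectorBasis.repr ((WithLp.equiv 2 _).symm x) j) ^ 2 := by
  set B := hM.eigenvectorBasis with hB
  set v : EuclideanSpace ℝ (Fin n) := (WithLp.equiv 2 _).symm x with hv
  set w : EuclideanSpace ℝ (Fin n) := (WithLp.equiv 2 _).symm (M.mulVec x) with hw
  have hMt : Mᵀ = M := by
    have := hM.eq
    simpa [Matrix.conjTranspose, Matrix.map, Matrix.transpose] using this
  have h1 : x ⬝ᵥ M.mulVec x = inner (𝕜 := ℝ) v w := by
    simp [PiLp.inner_apply, RCLike.inner_apply, dotProduct, hv, hw]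
    exact Finset.sum_congr rfl fun _ _ => mul_comm _ _
  have h2 : inner (𝕜 := ℝ) v w = ∑ j, (B.repr v j) * (B.repr w j) := by
    rw [← B.repr.inner_map_map v w]
    simp only [PiLp.inner_apply, RCLike.inner_apply, starRingEnd_apply, star_trivial]
    exact Finset.sum_congr rfl fun _ _ => mul_comm _ _
  have h3 : ∀ j, B.repr w j = hM.eigenvalues j * B.repr v j := by
    intro j
    have e1 : B.repr w j = inner (𝕜 := ℝ) (B j) w := B.repr_apply_apply w j
    have e2 : B.repr v j = inner (𝕜 := ℝ) (B j) v := B.repr_apply_apply v j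
    have he : M *ᵥ ((WithLp.equiv 2 _) (B j)) = hM.eigenvalues j • ((WithLp.equiv 2 _) (B j)) :=
      hM.mulVec_eigenvectorBasis j
    have e3 : inner (𝕜 := ℝ) (B j) w
        = ((WithLp.equiv 2 _) (B j)) ⬝ᵥ M.mulVec x := by
      simp [PiLp.inner_apply, RCLike.inner_apply, dotProduct, hw]
      exact Finset.sum_congr rfl fun _ _ => mul_comm _ _
    have e4 : ((WithLp.equiv 2 _) (B j)) ⬝ᵥ M.mulVec x
        = (M *ᵥ ((WithLp.equiv 2 _) (B j))) ⬝ᵥ x := by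
      rw [Matrix.dotProduct_mulVec, ← Matrix.mulVec_transpose, hMt]
    have e5 : ((WithLp.equiv 2 _) (B j)) ⬝ᵥ x = inner (𝕜 := ℝ) (B j) v := by
      simp [PiLp.inner_apply, RCLike.inner_apply, dotProduct, hv]
      exact Finset.sum_congr rfl fun _ _ => mul_comm _ _
    rw [e1, e2, e3, e4, he, smul_dotProduct, e5, smul_eq_mul]
  rw [h1, h2]
  refine Finset.sum_congr rfl fun j _ => ?_
  rw [h3 j]; ring

lemma quad_lb {n : ℕ} (M : Matrix (Fin n) (Fin n) ℝ) (hM : M.IsHermitian) (x : Fin n → ℝ) :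
    (⨅ j, hM.eigenvalues j) * ∑ j, x j ^ 2 ≤ x ⬝ᵥ M.mulVec x := by
  rcases Nat.eq_zero_or_pos n with h0 | hn
  · subst h0
    simp [dotProduct, Real.iInf_of_isEmpty]
  · set B := hM.eigenvectorBasis with hB
    set v : EuclideanSpace ℝ (Fin n) := (WithLp.equiv 2 _).symm x with hv
    have h2 : ∑ j, x j ^ 2 = ∑ j, (B.repr v j) ^ 2 := by
      have h := (B.repr.inner_map_map v v).symm
      simp only [PiLp.inner_apply, RCLike.inner_apply, starRingEnd_apply, star_trivial] at h
      simpa [hv, sq] using h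
    rw [quad_eq M hM x, h2, Finset.mul_sum]
    refine Finset.sum_le_sum fun j _ => ?_
    exact mul_le_mul_of_nonneg_right (ciInf_le (Set.Finite.bddBelow (Set.finite_range _)) j)
      (sq_nonneg _)

lemma normAe {m n : ℕ} (A : Matrix (Fin m) (Fin n) ℝ) (e : Fin n → ℝ) :
    e ⬝ᵥ (Aᴴ * A).mulVec e = ∑ i, (A i ⬝ᵥ e) ^ 2 := by
  rw [Matrix.conjTranspose_eq_transpose_of_trivial,
    ← Matrix.mulVec_mulVec, Matrix.dotProduct_mulVec, Matrix.vecMul_transpose]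
  simp [dotProduct, Matrix.mulVec, sq]

lemma expand_step {m n : ℕ} (A : Matrix (Fin m) (Fin n) ℝ)
    (hrows : ∀ i, ∑ j, (A i j) ^ 2 = 1) (e : Fin n → ℝ) (i : Fin m) :
    ∑ j, (e j - (A i ⬝ᵥ e) * A i j) ^ 2 = (∑ j, e j ^ 2) - (A i ⬝ᵥ e) ^ 2 := by
  have expand : ∀ j, (e j - (A i ⬝ᵥ e) * A i j) ^ 2
      = e j ^ 2 - 2 * (A i ⬝ᵥ e) * (A i j * e j) + (A i ⬝ᵥ e) ^ 2 * (A i j) ^ 2 :=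
    fun j => by ring
  simp_rw [expand, Finset.sum_add_distrib, Finset.sum_sub_distrib, ← Finset.mul_sum]
  rw [hrows i]
  have hd : ∑ j, A i j * e j = A i ⬝ᵥ e := rfl
  rw [hd]; ring

lemma one_step {m n : ℕ} [NeZero m] (A : Matrix (Fin m) (Fin n) ℝ)
    (hrows : ∀ i, ∑ j, (A i j) ^ 2 = 1) (e : Fin n → ℝ) :
    (1 / (m : ℝ)) * ∑ i, ∑ j, (e j - (A i ⬝ᵥ e) * A i j) ^ 2 ≤
      (1 - (⨅ j, (Matrix.isHermitian_conjTranspose_mul_self A).eigenvalues j) / m) * ∑ j, e j ^ 2 := by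
  have hm : (0 : ℝ) < m := by exact_mod_cast Nat.pos_of_ne_zero (NeZero.ne m)
  set lam := ⨅ j, (Matrix.isHermitian_conjTranspose_mul_self A).eigenvalues j with hlam
  have h1 : ∑ i, ∑ j, (e j - (A i ⬝ᵥ e) * A i j) ^ 2
      = (m : ℝ) * (∑ j, e j ^ 2) - ∑ i, (A i ⬝ᵥ e) ^ 2 := by
    simp_rw [expand_step A hrows e, Finset.sum_sub_distrib]
    simp [mul_comm]
  have h2 : lam * ∑ j, e j ^ 2 ≤ ∑ i, (A i ⬝ᵥ e) ^ 2 := by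
    rw [← normAe A e]
    exact quad_lb _ (Matrix.isHermitian_conjTranspose_mul_self A) e
  rw [h1]
  have h3 : (1/(m:ℝ)) * ((m:ℝ) * (∑ j, e j ^ 2) - ∑ i, (A i ⬝ᵥ e) ^ 2)
      ≤ (1/(m:ℝ)) * ((m:ℝ) * (∑ j, e j ^ 2) - lam * ∑ j, e j ^ 2) := by
    apply mul_le_mul_of_nonneg_left (by linarith) (by positivity)
  refine h3.trans (le_of_eq ?_)
  field_simp

lemma lam_le {m n : ℕ} [NeZero m] (A : Matrix (Fin m) (Fin n) ℝ)
    (hrows : ∀ i, ∑ j, (A i j) ^ 2 = 1) :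
    (⨅ j, (Matrix.isHermitian_conjTranspose_mul_self A).eigenvalues j) ≤ m := by
  have hm : (0 : ℝ) < m := by exact_mod_cast Nat.pos_of_ne_zero (NeZero.ne m)
  rcases Nat.eq_zero_or_pos n with h0 | hn
  · subst h0
    simp [Real.iInf_of_isEmpty]
  · set e : Fin n → ℝ := Pi.single ⟨0, hn⟩ 1 with he
    have h1 : ∑ j, e j ^ 2 = 1 := by simp [he, Pi.single_apply]
    have h2 := quad_lb _ (Matrix.isHermitian_conjTranspose_mul_self A) e
    rw [h1, mul_one, normAe A e] at h2
    refine h2.trans ?_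
    have h3 : ∀ i : Fin m, (A i ⬝ᵥ e) ^ 2 ≤ 1 := by
      intro i
      have : A i ⬝ᵥ e = A i ⟨0, hn⟩ := by simp [he, dotProduct, Pi.single_apply]
      rw [this, ← hrows i]
      exact Finset.single_le_sum (f := fun j => (A i j) ^ 2)
        (fun j _ => sq_nonneg _) (Finset.mem_univ _)
    calc ∑ i, (A i ⬝ᵥ e) ^ 2 ≤ ∑ _i : Fin m, (1:ℝ) := Finset.sum_le_sum fun i _ => h3 i
      _ = m := by simp

/-- Randomized Kaczmarz convergence (Strohmer–Vershynin, unit-norm rows, uniform selection):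
averaging over all sequences of k uniform independent row choices,
𝔼‖x_k − x*‖² ≤ (1 − σ_min²(A)/m)^k ‖x₀ − x*‖², where σ_min²(A) is the smallest
eigenvalue of AᵀA and x_k is the k-th Kaczmarz iterate. -/
theorem randomized_kaczmarz_convergence (m n k : ℕ) [NeZero m]
    (A : Matrix (Fin m) (Fin n) ℝ) (b : Fin m → ℝ) (x0 xstar : Fin n → ℝ)
    (hrows : ∀ i, ∑ j, (A i j) ^ 2 = 1)
    (hsol : A.mulVec xstar = b)
    (step : Fin m → (Fin n → ℝ) → (Fin n → ℝ))
    (hstep : ∀ i x, step i x = fun j => x j + (b i - A i ⬝ᵥ x) * A i j) :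
    ∑ ω : Fin k → Fin m, (1 / (m : ℝ) ^ k) *
        ∑ j, ((List.ofFn ω).foldl (fun x i => step i x) x0 j - xstar j) ^ 2 ≤
      (1 - (⨅ j, (Matrix.isHermitian_conjTranspose_mul_self A).eigenvalues j) / m) ^ k *
        ∑ j, (x0 j - xstar j) ^ 2 := by
  induction k generalizing x0 with
  | zero => simp
  | succ k ih =>
    have hm : (0 : ℝ) < m := by exact_mod_cast Nat.pos_of_ne_zero (NeZero.ne m)
    set lam := ⨅ j, (Matrix.isHermitian_conjTranspose_mul_self A).eigenvalues j with hlam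
    set c := 1 - lam / m with hc
    have hc0 : 0 ≤ c := by
      rw [hc, sub_nonneg, div_le_one hm]
      exact lam_le A hrows
    set g : (Fin n → ℝ) → Fin m → (Fin n → ℝ) := fun x i => step i x with hg
    have hfold : ∀ (i : Fin m) (w : Fin k → Fin m),
        (List.ofFn (Fin.cons i w : Fin (k+1) → Fin m)).foldl g x0
          = (List.ofFn w).foldl g (step i x0) := by
      intro i w
      rw [List.ofFn_succ]
      simp [Fin.cons_zero, Fin.cons_succ, hg]
    have e : Fin n → ℝ := fun j => x0 j - xstar j
    have hstep' : ∀ (i : Fin m) (j : Fin n), step i x0 j - xstar j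
        = (x0 j - xstar j) - (A i ⬝ᵥ (fun j => x0 j - xstar j)) * A i j := by
      intro i j
      have hb : b i = A i ⬝ᵥ xstar := by rw [← hsol]; rfl
      have hd : A i ⬝ᵥ (fun j => x0 j - xstar j) = A i ⬝ᵥ x0 - A i ⬝ᵥ xstar := by
        simp [dotProduct, mul_sub, Finset.sum_sub_distrib]
      simp only [hstep, hd, hb]
      ring
    calc ∑ ω : Fin (k+1) → Fin m, (1 / (m : ℝ) ^ (k+1)) *
            ∑ j, ((List.ofFn ω).foldl g x0 j - xstar j) ^ 2
        = ∑ p : Fin m × (Fin k → Fin m), (1 / (m : ℝ) ^ (k+1)) *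
            ∑ j, ((List.ofFn p.2).foldl g (step p.1 x0) j - xstar j) ^ 2 := by
          refine (Fintype.sum_equiv (Fin.consEquiv fun _ : Fin (k+1) => Fin m) _ _
            fun p => ?_).symm
          simp only [Fin.consEquiv, Equiv.coe_fn_mk]
          rw [hfold p.1 p.2]
      _ = ∑ i : Fin m, (1 / (m:ℝ)) * ∑ w : Fin k → Fin m, (1 / (m : ℝ) ^ k) *
            ∑ j, ((List.ofFn w).foldl g (step i x0) j - xstar j) ^ 2 := by
          rw [Fintype.sum_prod_type]
          refine Finset.sum_congr rfl fun i _ => ?_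
          rw [Finset.mul_sum]
          refine Finset.sum_congr rfl fun w _ => ?_
          rw [pow_succ]
          ring
      _ ≤ ∑ i : Fin m, (1 / (m:ℝ)) * (c ^ k * ∑ j, (step i x0 j - xstar j) ^ 2) := by
          refine Finset.sum_le_sum fun i _ => ?_
          exact mul_le_mul_of_nonneg_left (ih (step i x0)) (by positivity)
      _ = c ^ k * ((1 / (m:ℝ)) * ∑ i, ∑ j, ((x0 j - xstar j)
            - (A i ⬝ᵥ (fun j => x0 j - xstar j)) * A i j) ^ 2) := by
          simp only [hstep']
          rw [Finset.mul_sum, Finset.mul_sum]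
          exact Finset.sum_congr rfl fun i _ => by ring
      _ ≤ c ^ k * (c * ∑ j, (x0 j - xstar j) ^ 2) := by
          refine mul_le_mul_of_nonneg_left ?_ (by positivity)
          exact one_step A hrows (fun j => x0 j - xstar j)
      _ = c ^ (k+1) * ∑ j, (x0 j - xstar j) ^ 2 := by ring
end
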